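/- arXiv:1606.06322 — 3 statements merged into one kernel-verified Lean document; each statement's English description precedes it below -/
import Mathlib

section
/- Let j_1, j_2, j_3, j_4, j_5, j_6 be nonnegative half-integers with j_1 = j_5 + j_6 ≥ 3 and j_2 = j_3, such that the four triples (h, j_2, j_3), (h, j_5, j_6), (j_4, j_2, j_6), (j_4, j_5, j_3) satisfy the triangle condition for both h = j_1 and h = j_1 - 1. If the Wigner 6j-symbol {j_1-1, j_2, j_3; j_4, j_5, j_6} vanishes, then both {j_1-2, j_2, j_3; j_4, j_5, j_6} and {j_1-3, j_2, j_3; j_4, j_5, j_6} are nonzero. -/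
/-- `x` is a half-integer. -/
def IsHalfInt (x : ℝ) : Prop := ∃ k : ℤ, x = k / 2

/-- The triangle condition for three half-integers. -/
def TriangleCond (a b c : ℝ) : Prop :=
  (∃ k : ℤ, a + b + c = (k : ℝ)) ∧ |a - b| ≤ c ∧ c ≤ a + b

/-- `(a, b, c)` is a degenerate triangle: one of the triangle inequalities is an
equality. -/
def DegenTriangle (a b c : ℝ) : Prop := |a - b| = c ∨ c = a + b

/-- The four triples attached to the `6j`-symbol `{j₁ j₂ j₃; j₄ j₅ j₆}` all satisfy
the triangle condition. -/
def AllTriangles (j₁ j₂ j₃ j₄ j₅ j₆ : ℝ) : Prop :=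
  TriangleCond j₁ j₂ j₃ ∧ TriangleCond j₁ j₅ j₆ ∧ TriangleCond j₄ j₂ j₆ ∧
    TriangleCond j₄ j₅ j₃

/-- The coefficient `E` of the Biedenharn–Elliott three-term recurrence. -/
noncomputable def Ecoef (i₂ i₃ i₅ i₆ i₁ : ℝ) : ℝ :=
  Real.sqrt ((i₁ ^ 2 - (i₂ - i₃) ^ 2) * ((i₂ + i₃ + 1) ^ 2 - i₁ ^ 2) *
    (i₁ ^ 2 - (i₅ - i₆) ^ 2) * ((i₅ + i₆ + 1) ^ 2 - i₁ ^ 2))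

/-- The coefficient `F` of the Biedenharn–Elliott three-term recurrence. -/
def Fcoef (i₂ i₃ i₄ i₅ i₆ i₁ : ℝ) : ℝ :=
  (2 * i₁ + 1) *
    (i₁ * (i₁ + 1) * (-(i₁ * (i₁ + 1)) + i₂ * (i₂ + 1) + i₃ * (i₃ + 1))
      + i₅ * (i₅ + 1) * (i₁ * (i₁ + 1) + i₂ * (i₂ + 1) - i₃ * (i₃ + 1))
      + i₆ * (i₆ + 1) * (i₁ * (i₁ + 1) - i₂ * (i₂ + 1) + i₃ * (i₃ + 1))
      - 2 * i₁ * (i₁ + 1) * i₄ * (i₄ + 1))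

/-!
Since `j₁ = j₅ + j₆`, the symbol at `j₁` sits on a degenerate triangle and is nonzero, while
the one at `j₁ + 1` violates a triangle inequality and vanishes. Together with the zero at
`j₁ - 1`, the recurrence centred at `j₁` forces `F(j₁) = 0`. For `j₂ = j₃`,
`F(x) = (2x + 1) · x(x + 1) · (C - x(x + 1))` with `C` independent of `x`, so `C = j₁(j₁ + 1)` and
`F(j₁ - 2) = (2j₁ - 3)(j₁ - 2)(j₁ - 1)(4j₁ - 2) ≠ 0`. The recurrences centred at
`j₁ - 1` and `j₁ - 2` now propagate non-vanishing to `j₁ - 2` (via `E(j₁) > 0`) and to `j₁ - 3`.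
-/

namespace TriangleCond

variable {a b c : ℝ}

lemma nonneg (h : TriangleCond a b c) : 0 ≤ c :=
  (abs_nonneg _).trans h.2.1

lemma le_add (h : TriangleCond a b c) : a ≤ b + c := by
  linarith [le_abs_self (a - b), h.2.1]

lemma abs_sub_le (h : TriangleCond a b c) : |b - c| ≤ a := by
  obtain ⟨-, hab, hc⟩ := h
  rw [abs_sub_le_iff]
  constructor <;> linarith [neg_abs_le (a - b)]

end TriangleCond

lemma DegenTriangle.of_eq_add {a b c : ℝ} (h : a = b + c) (hc : 0 ≤ c) : DegenTriangle a b c :=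
  .inl (by rw [h, add_sub_cancel_left, abs_of_nonneg hc])

lemma Ecoef_pos {b c e f a : ℝ} (hbc : |b - c| < a) (hbca : a < b + c + 1)
    (hef : |e - f| < a) (hefa : a < e + f + 1) : 0 < Ecoef b c e f a := by
  have ha : 0 < a := (abs_nonneg _).trans_lt hbc
  have hsq {x y : ℝ} (hxy : |x| < y) : 0 < y ^ 2 - x ^ 2 :=
    sub_pos.mpr (sq_lt_sq' (abs_lt.mp hxy).1 (abs_lt.mp hxy).2)
  have hsq' {y : ℝ} (hy : a < y) : 0 < y ^ 2 - a ^ 2 :=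
    sub_pos.mpr (sq_lt_sq' (by linarith) hy)
  exact Real.sqrt_pos.mpr
    (mul_pos (mul_pos (mul_pos (hsq hbc) (hsq' hbca)) (hsq hef)) (hsq' hefa))

lemma Fcoef_self (b d e f a : ℝ) :
    Fcoef b b d e f a = (2 * a + 1) * (a * (a + 1)) *
      (2 * (b * (b + 1)) + e * (e + 1) + f * (f + 1) - 2 * (d * (d + 1)) - a * (a + 1)) := by
  unfold Fcoef
  ring

lemma Fcoef_self_sub_two_ne_zero {b d e f a : ℝ} (ha : 2 < a) (hF : Fcoef b b d e f a = 0) :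
    Fcoef b b d e f (a - 2) ≠ 0 := by
  rw [Fcoef_self] at hF ⊢
  have hC := (mul_eq_zero.mp hF).resolve_left (by positivity)
  have hF₂ : (2 * (a - 2) + 1) * ((a - 2) * (a - 2 + 1)) *
      (2 * (b * (b + 1)) + e * (e + 1) + f * (f + 1) - 2 * (d * (d + 1)) - (a - 2) * (a - 2 + 1))
      = (2 * a - 3) * ((a - 2) * (a - 1)) * (4 * a - 2) := by
    linear_combination (2 * (a - 2) + 1) * ((a - 2) * (a - 2 + 1)) * hC
  rw [hF₂]
  exact (mul_pos (mul_pos (by linarith) (mul_pos (by linarith) (by linarith))) (by linarith)).ne'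

/-- `w x` plays the role of `{x, b, c; d, e, f}` as a function of its first entry. -/
def BiedenharnElliott (b c d e f : ℝ) (w : ℝ → ℝ) : Prop :=
  ∀ i, i * Ecoef b c e f (i + 1) * w (i + 1) + Fcoef b c d e f i * w i
    + (i + 1) * Ecoef b c e f i * w (i - 1) = 0

namespace BiedenharnElliott

variable {b c d e f : ℝ} {w : ℝ → ℝ}

lemma Fcoef_eq_zero (hrec : BiedenharnElliott b c d e f w) {a : ℝ} (habove : w (a + 1) = 0)
    (hbelow : w (a - 1) = 0) (ha : w a ≠ 0) : Fcoef b c d e f a = 0 := by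
  have := hrec a
  rw [habove, hbelow, mul_zero, mul_zero, zero_add, add_zero] at this
  exact (mul_eq_zero.mp this).resolve_right ha

lemma ne_zero_sub_one (hrec : BiedenharnElliott b c d e f w) (i : ℝ)
    (h : i * Ecoef b c e f (i + 1) * w (i + 1) + Fcoef b c d e f i * w i ≠ 0) :
    w (i - 1) ≠ 0 := by
  intro hw
  have := hrec i
  rw [hw, mul_zero, add_zero] at this
  exact h this

end BiedenharnElliott

theorem stmt_5_general (W : ℝ → ℝ → ℝ → ℝ → ℝ → ℝ → ℝ)
    (hvanish : ∀ a b c d e f : ℝ, ¬ AllTriangles a b c d e f → W a b c d e f = 0)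
    (hdegen : ∀ a b c d e f : ℝ, AllTriangles a b c d e f →
      (DegenTriangle a b c ∨ DegenTriangle a e f ∨ DegenTriangle d b f ∨
        DegenTriangle d e c) → W a b c d e f ≠ 0)
    (hrec : ∀ i₁ i₂ i₃ i₄ i₅ i₆ : ℝ,
      i₁ * Ecoef i₂ i₃ i₅ i₆ (i₁ + 1) * W (i₁ + 1) i₂ i₃ i₄ i₅ i₆
        + Fcoef i₂ i₃ i₄ i₅ i₆ i₁ * W i₁ i₂ i₃ i₄ i₅ i₆
        + (i₁ + 1) * Ecoef i₂ i₃ i₅ i₆ i₁ * W (i₁ - 1) i₂ i₃ i₄ i₅ i₆ = 0)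
    (j₁ j₂ j₃ j₄ j₅ j₆ : ℝ)
    (hsum : j₁ = j₅ + j₆) (h3 : 3 ≤ j₁) (h23 : j₂ = j₃)
    (htri : ∀ h : ℝ, h = j₁ ∨ h = j₁ - 1 →
      TriangleCond h j₂ j₃ ∧ TriangleCond h j₅ j₆ ∧ TriangleCond j₄ j₂ j₆ ∧
        TriangleCond j₄ j₅ j₃)
    (hzero : W (j₁ - 1) j₂ j₃ j₄ j₅ j₆ = 0) :
    W (j₁ - 2) j₂ j₃ j₄ j₅ j₆ ≠ 0 ∧ W (j₁ - 3) j₂ j₃ j₄ j₅ j₆ ≠ 0 := by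
  subst h23
  have hw : BiedenharnElliott j₂ j₂ j₄ j₅ j₆ (W · j₂ j₂ j₄ j₅ j₆) :=
    fun i => hrec i j₂ j₂ j₄ j₅ j₆
  obtain ⟨ht₁₂, ht₁₅, -, -⟩ := htri j₁ (.inl rfl)
  have htop : W j₁ j₂ j₂ j₄ j₅ j₆ ≠ 0 := hdegen _ _ _ _ _ _ (htri j₁ (.inl rfl))
    (.inr (.inl (.of_eq_add hsum ht₁₅.nonneg)))
  have habove : W (j₁ + 1) j₂ j₂ j₄ j₅ j₆ = 0 :=
    hvanish _ _ _ _ _ _ fun h => by linarith [h.2.1.le_add]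
  have hF := hw.Fcoef_eq_zero habove hzero htop
  have hE : 0 < Ecoef j₂ j₂ j₅ j₆ j₁ :=
    Ecoef_pos (by rw [sub_self, abs_zero]; linarith) (by linarith [ht₁₂.le_add])
      (by linarith [(htri (j₁ - 1) (.inr rfl)).2.1.abs_sub_le]) (by linarith)
  have h₂ : W (j₁ - 2) j₂ j₂ j₄ j₅ j₆ ≠ 0 := by
    have := hw.ne_zero_sub_one (j₁ - 1)
    rw [sub_add_cancel, hzero, mul_zero, add_zero, sub_sub, one_add_one_eq_two] at this
    exact this (mul_ne_zero (mul_ne_zero (by linarith) hE.ne') htop)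
  have h₃ : W (j₁ - 3) j₂ j₂ j₄ j₅ j₆ ≠ 0 := by
    have := hw.ne_zero_sub_one (j₁ - 2)
    rw [show j₁ - 2 + 1 = j₁ - 1 by ring, hzero, mul_zero, zero_add, sub_sub,
      two_add_one_eq_three] at this
    exact this (mul_ne_zero (Fcoef_self_sub_two_ne_zero (by linarith) hF) h₂)
  exact ⟨h₂, h₃⟩

/-- Proposition 2.2 of the paper, stated for an abstract function `W` (the Wigner
`6j`-symbol) satisfying the vanishing property, the non-vanishing property for
degenerate triangles, and the Biedenharn–Elliott three-term recurrence.

If `j₁ = j₅ + j₆ ≥ 3`, `j₂ = j₃`, all four triples satisfy the triangle condition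
for `h = j₁` and `h = j₁ - 1`, and `W (j₁-1) j₂ j₃ j₄ j₅ j₆ = 0`, then both
`W (j₁-2) j₂ j₃ j₄ j₅ j₆` and `W (j₁-3) j₂ j₃ j₄ j₅ j₆` are nonzero. -/
theorem stmt_5 (W : ℝ → ℝ → ℝ → ℝ → ℝ → ℝ → ℝ)
    (hvanish : ∀ a b c d e f : ℝ, ¬ AllTriangles a b c d e f → W a b c d e f = 0)
    (hdegen : ∀ a b c d e f : ℝ, AllTriangles a b c d e f →
      (DegenTriangle a b c ∨ DegenTriangle a e f ∨ DegenTriangle d b f ∨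
        DegenTriangle d e c) → W a b c d e f ≠ 0)
    (hrec : ∀ i₁ i₂ i₃ i₄ i₅ i₆ : ℝ,
      i₁ * Ecoef i₂ i₃ i₅ i₆ (i₁ + 1) * W (i₁ + 1) i₂ i₃ i₄ i₅ i₆
        + Fcoef i₂ i₃ i₄ i₅ i₆ i₁ * W i₁ i₂ i₃ i₄ i₅ i₆
        + (i₁ + 1) * Ecoef i₂ i₃ i₅ i₆ i₁ * W (i₁ - 1) i₂ i₃ i₄ i₅ i₆ = 0)
    (j₁ j₂ j₃ j₄ j₅ j₆ : ℝ)
    (half₁ : IsHalfInt j₁) (half₂ : IsHalfInt j₂) (half₃ : IsHalfInt j₃)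
    (half₄ : IsHalfInt j₄) (half₅ : IsHalfInt j₅) (half₆ : IsHalfInt j₆)
    (n₁ : 0 ≤ j₁) (n₂ : 0 ≤ j₂) (n₃ : 0 ≤ j₃) (n₄ : 0 ≤ j₄) (n₅ : 0 ≤ j₅)
    (n₆ : 0 ≤ j₆)
    (hsum : j₁ = j₅ + j₆) (h3 : 3 ≤ j₁) (h23 : j₂ = j₃)
    (htri : ∀ h : ℝ, h = j₁ ∨ h = j₁ - 1 →
      TriangleCond h j₂ j₃ ∧ TriangleCond h j₅ j₆ ∧ TriangleCond j₄ j₂ j₆ ∧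
        TriangleCond j₄ j₅ j₃)
    (hzero : W (j₁ - 1) j₂ j₃ j₄ j₅ j₆ = 0) :
    W (j₁ - 2) j₂ j₃ j₄ j₅ j₆ ≠ 0 ∧ W (j₁ - 3) j₂ j₃ j₄ j₅ j₆ ≠ 0 :=
  stmt_5_general W hvanish hdegen hrec j₁ j₂ j₃ j₄ j₅ j₆ hsum h3 h23 htri hzero
end

section
/- For m ≥ 1 and v = Σ_{i=0}^m a_i v_i, define the 2×(m+2) matrix X(v) with rows (−a_m·binom(m,m), a_{m-1}·binom(m,m-1), ..., a_0·binom(m,0), 0) and (0, −a_m·binom(m,m), ..., −a_1·binom(m,1), a_0·binom(m,0)), and the (m+2)×2 matrix Y(v) whose transpose has rows ((m+1)a_0, m·a_1, ..., 2a_{m-1}, a_m, 0) and (0, a_0, 2a_1, ..., m·a_{m-1}, (m+1)a_m). Then X(v_i)Y(v_j) − X(v_j)Y(v_i) = (−1)^i·binom(m,i)·(m+2)·I_2 if i + j = m, and equals 0 otherwise. -/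
open Matrix

variable (F : Type*) [Field F] [CharZero F]

/-- The `2 × (m+2)` matrix `X(v)` for `v = Σ a_i v_i`, with rows
`(-C(m,m)a_m, C(m,m-1)a_{m-1}, ..., C(m,0)a_0, 0)` and
`(0, -C(m,m)a_m, ..., -C(m,1)a_1, C(m,0)a_0)`. -/
def X9 (m : ℕ) (a : Fin (m + 1) → F) : Matrix (Fin 2) (Fin (m + 2)) F :=
  Matrix.of fun r k =>
    if r = 0 then
      if h : (k : ℕ) ≤ m then
        (-1 : F) ^ ((k : ℕ) + 1) * (m.choose (m - (k : ℕ))) * a ⟨m - (k : ℕ), by omega⟩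
      else 0
    else
      if h : 1 ≤ (k : ℕ) then
        (-1 : F) ^ (k : ℕ) * (m.choose (m + 1 - (k : ℕ))) *
          a ⟨m + 1 - (k : ℕ), by omega⟩
      else 0

/-- The `(m+2) × 2` matrix `Y(v)` for `v = Σ a_i v_i`, whose transpose has rows
`((m+1)a_0, m a_1, ..., 2a_{m-1}, a_m, 0)` and `(0, a_0, 2a_1, ..., (m+1)a_m)`. -/
def Y9 (m : ℕ) (a : Fin (m + 1) → F) : Matrix (Fin (m + 2)) (Fin 2) F :=
  Matrix.of fun k c =>
    if c = 0 then
      if h : (k : ℕ) ≤ m then ((m : F) + 1 - (k : ℕ)) * a ⟨(k : ℕ), by omega⟩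
      else 0
    else
      if h : 1 ≤ (k : ℕ) then ((k : ℕ) : F) * a ⟨(k : ℕ) - 1, by omega⟩
      else 0

/-!
`X(v_i)` has a single nonzero entry in each row and `Y(v_j)` a single nonzero entry in each
column, so every entry of `X(v_i) Y(v_j)` is a single product, nonzero only when `i + j = m`
(diagonal), `i + j + 1 = m` (entry `(0,1)`) or `i + j = m + 1` (entry `(1,0)`). On the diagonal
`m` odd makes `(-1)^(m-i+1) = (-1)^i` and `(-1)^(m-j+1) = -(-1)^i`, so the two terms add up to
`(-1)^i C(m,i) ((m+1-j) + (m+1-i)) = (-1)^i C(m,i) (m+2)`. Off the diagonal `i` and `j` have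
the same parity and the two terms cancel by `C(m,i+1) (i+1) = C(m,i) (m-i)`.
-/

theorem Nat.choose_mul_succ_eq_of_add_succ_eq {m i j : ℕ} (h : i + j + 1 = m) :
    m.choose i * (j + 1) = m.choose j * (i + 1) := by
  rw [← Nat.choose_symm_of_eq_add (a := i + 1) (b := j) (by omega), Nat.choose_succ_right_eq,
    show m - i = j + 1 by omega]

theorem Nat.choose_mul_eq_of_add_eq_succ {m i j : ℕ} (h : i + j = m + 1) :
    m.choose i * i = m.choose j * j := by
  rcases i with _ | i
  · rw [Nat.choose_eq_zero_of_lt (by omega : m < j), zero_mul, mul_zero]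
  rcases j with _ | j
  · rw [Nat.choose_eq_zero_of_lt (by omega : m < i + 1), zero_mul, mul_zero]
  rw [Nat.choose_succ_right_eq, Nat.choose_succ_right_eq, show m - i = j + 1 by omega,
    show m - j = i + 1 by omega, Nat.choose_mul_succ_eq_of_add_succ_eq (by omega)]

theorem neg_one_pow_eq_of_mod_two_eq {R : Type*} [Monoid R] [HasDistribNeg R] {a b : ℕ}
    (h : a % 2 = b % 2) : (-1 : R) ^ a = (-1) ^ b :=
  neg_one_pow_congr (by simp only [Nat.even_iff, h])

theorem Matrix.mul_apply_of_row_eq_single {l n o R : Type*} [Fintype n] [DecidableEq n]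
    [NonUnitalNonAssocSemiring R] {A : Matrix l n R} (B : Matrix n o R) {r : l} (c : o)
    {k₀ : n} {a : R} (hA : ∀ k, A r k = if k = k₀ then a else 0) :
    (A * B) r c = a * B k₀ c := by
  simp [mul_apply, hA]

section Entries

variable {K : Type*} [Field K] (m : ℕ)

theorem X9_single_apply_zero (i : Fin (m + 1)) (k : Fin (m + 2)) :
    X9 K m (Pi.single i 1) 0 k =
      if k = i.rev.castSucc then (-1) ^ (m - i + 1) * (m.choose i : K) else 0 := by
  rw [X9, of_apply, if_pos rfl]
  simp only [Pi.single_apply, Fin.ext_iff, Fin.val_castSucc, Fin.val_rev]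
  split_ifs with hk hki hk' <;> try first | omega | rfl | simp only [mul_zero]
  rw [hki, show (k : ℕ) = m - i by omega, mul_one]

theorem X9_single_apply_one (i : Fin (m + 1)) (k : Fin (m + 2)) :
    X9 K m (Pi.single i 1) 1 k =
      if k = i.rev.succ then (-1) ^ (m + 1 - i) * (m.choose i : K) else 0 := by
  rw [X9, of_apply, if_neg one_ne_zero]
  simp only [Pi.single_apply, Fin.ext_iff, Fin.val_succ, Fin.val_rev]
  split_ifs with hk hki hk' <;> try first | omega | rfl | simp only [mul_zero]
  rw [hki, show (k : ℕ) = m + 1 - i by omega, mul_one]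

theorem Y9_single_apply_zero (j : Fin (m + 1)) (k : Fin (m + 2)) :
    Y9 K m (Pi.single j 1) k 0 = if k = j.castSucc then (m : K) + 1 - j else 0 := by
  rw [Y9, of_apply, if_pos rfl]
  simp only [Pi.single_apply, Fin.ext_iff, Fin.val_castSucc]
  split_ifs with hk hkj hk' <;> try first | omega | rfl | simp only [mul_zero]
  rw [hkj, mul_one]

theorem Y9_single_apply_one (j : Fin (m + 1)) (k : Fin (m + 2)) :
    Y9 K m (Pi.single j 1) k 1 = if k = j.succ then (j : K) + 1 else 0 := by
  rw [Y9, of_apply, if_neg one_ne_zero]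
  simp only [Pi.single_apply, Fin.ext_iff, Fin.val_succ]
  split_ifs with hk hkj hk' <;> try first | omega | rfl | simp only [mul_zero]
  rw [hk', mul_one]
  push_cast
  ring

end Entries

section Commutator

variable {K : Type*} [Field K] {m : ℕ}

theorem neg_one_pow_mul_choose_sub_of_add_eq (hm : Odd m) {i j : ℕ} (hij : i + j = m) (a b : K) :
    (-1) ^ (j + 1) * (m.choose i : K) * a - (-1) ^ (i + 1) * (m.choose j : K) * b =
      (-1) ^ i * (m.choose i : K) * (a + b) := by
  obtain ⟨n, rfl⟩ := hm
  rw [Nat.choose_symm_of_eq_add (a := j) (b := i) (by omega),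
    neg_one_pow_eq_of_mod_two_eq (a := j + 1) (b := i) (by omega)]
  ring

theorem X9_mul_Y9_sub_apply_zero_zero (hm : Odd m) (i j : Fin (m + 1)) :
    (X9 K m (Pi.single i 1) * Y9 K m (Pi.single j 1)
      - X9 K m (Pi.single j 1) * Y9 K m (Pi.single i 1)) 0 0 =
      if (i : ℕ) + j = m then (-1) ^ (i : ℕ) * (m.choose i : K) * ((m : K) + 2) else 0 := by
  rw [Matrix.sub_apply, mul_apply_of_row_eq_single _ _ (X9_single_apply_zero m i),
    mul_apply_of_row_eq_single _ _ (X9_single_apply_zero m j), Y9_single_apply_zero,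
    Y9_single_apply_zero]
  simp only [Fin.ext_iff, Fin.val_castSucc, Fin.val_rev]
  split_ifs with h₁ h₂ h <;> try omega
  · have hmK : (m : K) = (i : ℕ) + (j : ℕ) := by
      exact_mod_cast congrArg (Nat.cast : ℕ → K) h.symm
    rw [show m - (i : ℕ) = j by omega, show m - (j : ℕ) = i by omega,
      neg_one_pow_mul_choose_sub_of_add_eq hm h, hmK]
    ring
  · simp only [mul_zero, sub_zero]

theorem X9_mul_Y9_sub_apply_one_one (hm : Odd m) (i j : Fin (m + 1)) :
    (X9 K m (Pi.single i 1) * Y9 K m (Pi.single j 1)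
      - X9 K m (Pi.single j 1) * Y9 K m (Pi.single i 1)) 1 1 =
      if (i : ℕ) + j = m then (-1) ^ (i : ℕ) * (m.choose i : K) * ((m : K) + 2) else 0 := by
  rw [Matrix.sub_apply, mul_apply_of_row_eq_single _ _ (X9_single_apply_one m i),
    mul_apply_of_row_eq_single _ _ (X9_single_apply_one m j), Y9_single_apply_one,
    Y9_single_apply_one]
  simp only [Fin.ext_iff, Fin.val_succ, Fin.val_rev]
  split_ifs with h₁ h₂ h <;> try omega
  · have hmK : (m : K) = (i : ℕ) + (j : ℕ) := by
      exact_mod_cast congrArg (Nat.cast : ℕ → K) h.symm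
    rw [show m + 1 - (i : ℕ) = j + 1 by omega, show m + 1 - (j : ℕ) = i + 1 by omega,
      neg_one_pow_mul_choose_sub_of_add_eq hm h, hmK]
    ring
  · simp only [mul_zero, sub_zero]

theorem X9_mul_Y9_sub_apply_zero_one (hm : Odd m) (i j : Fin (m + 1)) :
    (X9 K m (Pi.single i 1) * Y9 K m (Pi.single j 1)
      - X9 K m (Pi.single j 1) * Y9 K m (Pi.single i 1)) 0 1 = 0 := by
  rw [Matrix.sub_apply, mul_apply_of_row_eq_single _ _ (X9_single_apply_zero m i),
    mul_apply_of_row_eq_single _ _ (X9_single_apply_zero m j), Y9_single_apply_one,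
    Y9_single_apply_one]
  simp only [Fin.ext_iff, Fin.val_castSucc, Fin.val_succ, Fin.val_rev]
  split_ifs with h₁ h₂ <;> try omega
  · have h : (i : ℕ) + j + 1 = m := by omega
    have hc : (m.choose i : K) * ((j : ℕ) + 1) = m.choose j * ((i : ℕ) + 1) := by
      exact_mod_cast congrArg (Nat.cast : ℕ → K) (Nat.choose_mul_succ_eq_of_add_succ_eq h)
    rw [neg_one_pow_eq_of_mod_two_eq (a := m - j + 1) (b := m - i + 1)
      (by obtain ⟨n, rfl⟩ := hm; omega)]
    linear_combination (-1) ^ (m - (i : ℕ) + 1) * hc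
  · simp only [mul_zero, sub_zero]

theorem X9_mul_Y9_sub_apply_one_zero (hm : Odd m) (i j : Fin (m + 1)) :
    (X9 K m (Pi.single i 1) * Y9 K m (Pi.single j 1)
      - X9 K m (Pi.single j 1) * Y9 K m (Pi.single i 1)) 1 0 = 0 := by
  rw [Matrix.sub_apply, mul_apply_of_row_eq_single _ _ (X9_single_apply_one m i),
    mul_apply_of_row_eq_single _ _ (X9_single_apply_one m j), Y9_single_apply_zero,
    Y9_single_apply_zero]
  simp only [Fin.ext_iff, Fin.val_castSucc, Fin.val_succ, Fin.val_rev]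
  split_ifs with h₁ h₂ <;> try omega
  · have h : (i : ℕ) + j = m + 1 := by omega
    have hc : (m.choose i : K) * (i : ℕ) = m.choose j * (j : ℕ) := by
      exact_mod_cast congrArg (Nat.cast : ℕ → K) (Nat.choose_mul_eq_of_add_eq_succ h)
    have hmK : (m : K) + 1 = (i : ℕ) + (j : ℕ) := by
      exact_mod_cast congrArg (Nat.cast : ℕ → K) h.symm
    rw [neg_one_pow_eq_of_mod_two_eq (a := m + 1 - j) (b := m + 1 - i)
      (by obtain ⟨n, rfl⟩ := hm; omega)]
    linear_combination (-1) ^ (m + 1 - (i : ℕ)) * (hc + (m.choose i - m.choose j : K) * hmK)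
  · simp only [mul_zero, sub_zero]

end Commutator

/-- Verification of relation (funca) for the uniserial representation with socle
factors `V(1), V(m+1), V(1)` (`m = 2n - 1`):
`X(v_i)Y(v_j) - X(v_j)Y(v_i) = (-1)^i C(m,i) (m+2) I₂` if `i + j = m`, else `0`. -/
theorem stmt_9 (n m : ℕ) (hn : 1 ≤ n) (hm : m = 2 * n - 1)
    (i j : Fin (m + 1)) :
    X9 F m (Pi.single i 1) * Y9 F m (Pi.single j 1)
      - X9 F m (Pi.single j 1) * Y9 F m (Pi.single i 1) =
    if (i : ℕ) + (j : ℕ) = m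
      then ((-1 : F) ^ (i : ℕ) * (m.choose (i : ℕ)) * ((m : F) + 2)) •
        (1 : Matrix (Fin 2) (Fin 2) F)
      else 0 := by
  have hodd : Odd m := ⟨n - 1, by omega⟩
  ext r c
  fin_cases r <;> fin_cases c <;> dsimp only [Fin.zero_eta, Fin.mk_one]
  · rw [X9_mul_Y9_sub_apply_zero_zero hodd]
    split_ifs <;> simp
  · rw [X9_mul_Y9_sub_apply_zero_one hodd]
    split_ifs <;> simp
  · rw [X9_mul_Y9_sub_apply_one_zero hodd]
    split_ifs <;> simp
  · rw [X9_mul_Y9_sub_apply_one_one hodd]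
    split_ifs <;> simp
end

section
/- Let h_n be the Heisenberg Lie algebra of dimension 2n+1 with center z. Every nonzero ideal of the semidirect product g = sl(2) ⋉ h_n (with sl(2) acting so that z and h_n/z are irreducible sl(2)-modules) contains z. Consequently, every non-faithful representation of g factors through g/z ≅ sl(2) ⋉ V(2n−1). -/
/-!
Let `I ≠ ⊥` be an ideal. The ideal `I ⊓ n` lies in `n`, so it is `⊥`, `z` or `n`; only `⊥` needs
work. By simplicity of `g ⧸ n`, the ideal `I ⊔ n` is `n` (then `I ≤ n` and `I ∈ {z, n}`) or `⊤`.
In the latter case `⁅g, n⁆ = ⁅I, n⁆ + ⁅n, n⁆ ≤ (I ⊓ n) + z = z`, so every subspace between `z`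
and `n` is an ideal; irreducibility then forces `dim n ≤ dim z + 1 = 2`, which is false.
A non-faithful representation has a nonzero kernel, which therefore contains `z`.
-/

open Module

namespace LieIdeal

section CommRing

variable {R L : Type*} [CommRing R] [LieRing L] [LieAlgebra R L]

def quotientMk (n : LieIdeal R L) : L →ₗ⁅R⁆ L ⧸ n :=
  { LieSubmodule.Quotient.mk' n with map_lie' := rfl }

theorem ker_quotientMk (n : LieIdeal R L) : (quotientMk n).ker = n := by
  ext x
  exact LieSubmodule.Quotient.mk_eq_zero (N := n)

theorem eq_or_eq_top_of_le_of_isSimple {n J : LieIdeal R L} [LieAlgebra.IsSimple R (L ⧸ n)]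
    (hnJ : n ≤ J) : J = n ∨ J = ⊤ := by
  rcases LieAlgebra.IsSimple.eq_bot_or_eq_top (J.map (quotientMk n)) with h | h
  · rw [map_eq_bot_iff, ker_quotientMk] at h
    exact .inl (le_antisymm h hnJ)
  · refine .inr (eq_top_iff.2 fun x _ ↦ ?_)
    obtain ⟨⟨a, ha⟩, hax⟩ := mem_map_of_surjective (LieSubmodule.Quotient.surjective_mk' n)
      (h ▸ LieSubmodule.mem_top (quotientMk n x))
    have hxa : x - a ∈ n := by
      rw [← ker_quotientMk n, LieHom.mem_ker, map_sub, sub_eq_zero]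
      exact hax.symm
    simpa using J.add_mem (hnJ hxa) ha

theorem lie_top_le_lie_self_of_inf_eq_bot {I n : LieIdeal R L} (hinf : I ⊓ n = ⊥)
    (hsup : I ⊔ n = ⊤) : ⁅(⊤ : LieIdeal R L), n⁆ ≤ ⁅n, n⁆ := by
  rw [← hsup, LieSubmodule.sup_lie]
  exact sup_le ((LieSubmodule.lie_le_inf I n).trans hinf.le |>.trans bot_le) le_rfl

end CommRing

section Field

variable {K L : Type*} [Field K] [LieRing L] [LieAlgebra K L]

theorem finrank_le_succ_of_lie_top_le {z n : LieIdeal K L} [FiniteDimensional K z] (hzn : z < n)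
    (hlie : ⁅(⊤ : LieIdeal K L), n⁆ ≤ z)
    (hirr : ∀ J : LieIdeal K L, z ≤ J → J ≤ n → J = z ∨ J = n) :
    finrank K n ≤ finrank K z + 1 := by
  obtain ⟨w, hwn, hwz⟩ := SetLike.exists_of_lt hzn
  have hw0 : w ≠ 0 := fun h ↦ hwz (h ▸ z.zero_mem)
  have hspan : z.toSubmodule ⊔ K ∙ w ≤ n.toSubmodule :=
    sup_le hzn.le ((Submodule.span_singleton_le_iff_mem _ _).2 hwn)
  -- every subspace between `z` and `n` is an ideal, since `⁅L, n⁆ ≤ z`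
  let J : LieIdeal K L :=
    { z.toSubmodule ⊔ K ∙ w with
      lie_mem := fun {x _} hm ↦ Submodule.mem_sup_left <|
        hlie (LieSubmodule.lie_mem_lie (LieSubmodule.mem_top x) (hspan hm)) }
  have hwJ : w ∈ J := Submodule.mem_sup_right (Submodule.mem_span_singleton_self w)
  rcases hirr J (fun _ ↦ Submodule.mem_sup_left) (fun _ hx ↦ hspan hx) with hJ | hJ
  · exact absurd (hJ ▸ hwJ) hwz
  · calc finrank K n = finrank K J.toSubmodule := by rw [hJ]; rfl
      _ ≤ finrank K z + finrank K (K ∙ w) := Submodule.finrank_add_le_finrank_add_finrank _ _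
      _ = finrank K z + 1 := by rw [finrank_span_singleton hw0]

theorem le_of_ne_bot_of_isSimple_quotient {z n : LieIdeal K L} [FiniteDimensional K z]
    [LieAlgebra.IsSimple K (L ⧸ n)] (hzn : z ≤ n) (hdim : finrank K z + 1 < finrank K n)
    (hbr : ⁅n, n⁆ ≤ z) (hirr : ∀ I : LieIdeal K L, I ≤ n → I = ⊥ ∨ I = z ∨ I = n)
    {I : LieIdeal K L} (hI : I ≠ ⊥) : z ≤ I := by
  rcases hirr (I ⊓ n) inf_le_right with hinf | hinf | hinf
  · rcases eq_or_eq_top_of_le_of_isSimple (le_sup_right : n ≤ I ⊔ n) with hsup | hsup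
    · rcases hirr I (sup_eq_right.1 hsup) with h | h | h
      · exact absurd h hI
      · exact h.ge
      · exact h ▸ hzn
    · have hzn' : z < n := lt_of_le_of_ne hzn fun h ↦ by rw [h] at hdim; omega
      have hirr' : ∀ J : LieIdeal K L, z ≤ J → J ≤ n → J = z ∨ J = n := by
        intro J hzJ hJn
        rcases hirr J hJn with rfl | h | h
        · exact .inl (le_bot_iff.1 hzJ).symm
        · exact .inl h
        · exact .inr h
      have := finrank_le_succ_of_lie_top_le hzn'
        ((lie_top_le_lie_self_of_inf_eq_bot hinf hsup).trans hbr) hirr'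
      omega
  · exact hinf ▸ inf_le_left
  · exact hzn.trans (hinf ▸ inf_le_left)

end Field

end LieIdeal

theorem stmt_17_general (K g : Type*) [Field K]
    [LieRing g] [LieAlgebra K g]
    (nn : ℕ) (hnn : 1 ≤ nn) (n z : LieIdeal K g)
    (hzn : z ≤ n)
    (hbr : ⁅n, n⁆ = z)
    (hdimz : Module.finrank K z = 1)
    (hdimn : Module.finrank K n = 2 * nn + 1)
    (hirr : ∀ I : LieIdeal K g, I ≤ n → I = ⊥ ∨ I = z ∨ I = n)
    (hsimple : LieAlgebra.IsSimple K (g ⧸ n))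
    (M : Type*) [AddCommGroup M] [Module K M] [LieRingModule g M]
    [LieModule K g M]
    (hM : ∃ x : g, x ≠ 0 ∧ ∀ v : M, ⁅x, v⁆ = 0) :
    (∀ I : LieIdeal K g, I ≠ ⊥ → z ≤ I) ∧
    (∀ x ∈ z, ∀ v : M, ⁅x, v⁆ = 0) := by
  have : FiniteDimensional K z := Module.finite_of_finrank_eq_succ hdimz
  have hz : ∀ I : LieIdeal K g, I ≠ ⊥ → z ≤ I := fun I hI ↦
    LieIdeal.le_of_ne_bot_of_isSimple_quotient hzn (by omega) hbr.le hirr hI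
  refine ⟨hz, fun x hx ↦ (LieModule.mem_ker K g M x).1 (hz _ ?_ hx)⟩
  obtain ⟨x₀, hx₀, hx₀M⟩ := hM
  intro hker
  exact hx₀ ((LieSubmodule.mem_bot x₀).1 (hker ▸ (LieModule.mem_ker K g M x₀).2 hx₀M))

/-- Let `g` be a finite dimensional Lie algebra over a field `K` of characteristic
zero, containing an ideal `n` (the Heisenberg algebra `h_nn` of dimension
`2·nn + 1`) with `[n, n] = z`, where `z` is the (1-dimensional) center of `n`;
suppose `g ⧸ n` is simple (it is `sl(2)`) and the `g`-action is such that `z` and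
`n ⧸ z` are irreducible (equivalently, the only ideals of `g` contained in `n` are
`⊥`, `z`, `n`).  Then every nonzero ideal of `g` contains `z`; consequently every
non-faithful representation `M` of `g` is annihilated by `z`, i.e. factors through
`g ⧸ z ≅ sl(2) ⋉ V(2·nn - 1)`. -/
theorem stmt_17 (K g : Type*) [Field K] [CharZero K]
    [LieRing g] [LieAlgebra K g] [FiniteDimensional K g]
    (nn : ℕ) (hnn : 1 ≤ nn) (n z : LieIdeal K g)
    (hzn : z ≤ n)
    (hbr : ⁅n, n⁆ = z)
    (hzcentral : ∀ x ∈ z, ∀ y ∈ n, ⁅x, y⁆ = 0)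
    (hcenter : ∀ x ∈ n, (∀ y ∈ n, ⁅x, y⁆ = 0) → x ∈ z)
    (hdimz : Module.finrank K z = 1)
    (hdimn : Module.finrank K n = 2 * nn + 1)
    (hirr : ∀ I : LieIdeal K g, I ≤ n → I = ⊥ ∨ I = z ∨ I = n)
    (hsimple : LieAlgebra.IsSimple K (g ⧸ n))
    (M : Type*) [AddCommGroup M] [Module K M] [LieRingModule g M]
    [LieModule K g M]
    (hM : ∃ x : g, x ≠ 0 ∧ ∀ v : M, ⁅x, v⁆ = 0) :
    (∀ I : LieIdeal K g, I ≠ ⊥ → z ≤ I) ∧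
    (∀ x ∈ z, ∀ v : M, ⁅x, v⁆ = 0) :=
  stmt_17_general K g nn hnn n z hzn hbr hdimz hdimn hirr hsimple M hM
end
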